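/- Let (S, ρ) be a measure space and (E, ν) a measure space, A a finite type, φ : E → A measurable (A carrying the discrete σ-algebra), Q : S → A → ℝ, θ₀ ∈ ℝ, and μ : ℝ → S → E → ℝ. Assume: (i) (s,e) ↦ μ θ s e · Q s (φ e) is integrable with respect to the product measure ρ × ν for every θ in some neighborhood of θ₀; (ii) for (ρ × ν)-almost every (s,e), the map θ ↦ μ θ s e is differentiable on that neighborhood with μ θ₀ s e > 0; (iii) there is a (ρ × ν)-integrable function h : S × E → ℝ dominating |(d/dθ) μ θ s e · Q s (φ e)| on that neighborhood for almost every (s,e). Then θ ↦ ∫_S ∫_E μ θ s e · Q s (φ e) dν(e) dρ(s) has derivative at θ₀ equal to ∫_S ∫_E μ θ₀ s e · (d/dθ)|_{θ₀} log(μ θ s e) · Q s (φ e) dν(e) dρ(s). -/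

import Mathlib

open MeasureTheory Filter Topology

/-! The score-function identity `μ · ∂_θ log μ = ∂_θ μ` holds wherever `μ > 0`, so the claimed
integrand agrees almost everywhere with `∂_θ μ · Q ∘ φ`. The theorem is therefore
differentiation under the integral sign for the joint integral over `ρ × ν`, transported to the
iterated integral by Fubini. -/

theorem aestronglyMeasurable_of_ae_hasDerivAt
    {𝕜 α E : Type*} [NontriviallyNormedField 𝕜] [MeasurableSpace α] {μ : Measure α}
    [NormedAddCommGroup E] [NormedSpace 𝕜 E]
    {F : 𝕜 → α → E} {F' : α → E} {x₀ : 𝕜}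
    (hF_meas : ∀ᶠ x in 𝓝 x₀, AEStronglyMeasurable (F x) μ)
    (h_diff : ∀ᵐ a ∂μ, HasDerivAt (F · a) (F' a) x₀) :
    AEStronglyMeasurable F' μ := by
  obtain ⟨u, hu⟩ := exists_seq_tendsto (𝓝[≠] x₀)
  obtain ⟨N, hN⟩ := eventually_atTop.1 (hu.eventually (hF_meas.filter_mono nhdsWithin_le_nhds))
  have hu_shift : Tendsto (fun n => u (n + N)) atTop (𝓝[≠] x₀) :=
    (tendsto_add_atTop_iff_nat N).2 hu
  refine aestronglyMeasurable_of_tendsto_ae atTop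
    (f := fun n a => slope (F · a) x₀ (u (n + N))) (fun n => ?_) ?_
  · simp only [slope_def_module]
    exact ((hN _ (Nat.le_add_left N n)).sub hF_meas.self_of_nhds).const_smul _
  · filter_upwards [h_diff] with a ha using ha.tendsto_slope.comp hu_shift

theorem hasDerivAt_integral_of_dominated_of_ae_hasDerivAt
    {𝕜 α E : Type*} [RCLike 𝕜] [MeasurableSpace α] {μ : Measure α}
    [NormedAddCommGroup E] [NormedSpace ℝ E] [NormedSpace 𝕜 E]
    {F F' : 𝕜 → α → E} {x₀ : 𝕜} {s : Set 𝕜} {bound : α → ℝ} (hs : s ∈ 𝓝 x₀)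
    (hF_int : ∀ x ∈ s, Integrable (F x) μ)
    (h_bound : ∀ᵐ a ∂μ, ∀ x ∈ s, ‖F' x a‖ ≤ bound a) (bound_integrable : Integrable bound μ)
    (h_diff : ∀ᵐ a ∂μ, ∀ x ∈ s, HasDerivAt (F · a) (F' x a) x) :
    Integrable (F' x₀) μ ∧ HasDerivAt (fun x => ∫ a, F x a ∂μ) (∫ a, F' x₀ a ∂μ) x₀ := by
  have hF_meas : ∀ᶠ x in 𝓝 x₀, AEStronglyMeasurable (F x) μ :=
    Filter.mem_of_superset hs fun x hx => (hF_int x hx).aestronglyMeasurable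
  have hF'_meas : AEStronglyMeasurable (F' x₀) μ :=
    aestronglyMeasurable_of_ae_hasDerivAt hF_meas
      (h_diff.mono fun a ha => ha x₀ (mem_of_mem_nhds hs))
  exact hasDerivAt_integral_of_dominated_loc_of_deriv_le hs hF_meas
    (hF_int x₀ (mem_of_mem_nhds hs)) hF'_meas h_bound bound_integrable h_diff

theorem mul_deriv_log_eq_deriv {f : ℝ → ℝ} {x : ℝ} (hf : DifferentiableAt ℝ f x)
    (hx : f x ≠ 0) : f x * deriv (fun t => Real.log (f t)) x = deriv f x := by
  rw [deriv.log hf hx, mul_div_cancel₀ _ hx]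

theorem integral_integral_eq_integral_prod_of_ae_eq
    {α β G : Type*} [MeasurableSpace α] [MeasurableSpace β] {ρ : Measure α} {ν : Measure β}
    [SFinite ρ] [SFinite ν] [NormedAddCommGroup G] [NormedSpace ℝ G]
    {f : α → β → G} {g : α × β → G}
    (hg : Integrable g (ρ.prod ν)) (hfg : ∀ᵐ p ∂ρ.prod ν, f p.1 p.2 = g p) :
    ∫ a, ∫ b, f a b ∂ν ∂ρ = ∫ p, g p ∂(ρ.prod ν) := by
  rw [← integral_congr_ae hfg, integral_prod _ (hg.congr (hfg.mono fun _ h => h.symm))]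

theorem policy_gradient_full_general
    {S : Type*} [MeasurableSpace S] (ρ : Measure S) [SigmaFinite ρ]
    {E : Type*} [MeasurableSpace E] (ν : Measure E) [SigmaFinite ν]
    {A : Type*}
    (φ : E → A)
    (Q : S → A → ℝ) (θ₀ : ℝ) (μ : ℝ → S → E → ℝ)
    (U : Set ℝ) (hU : U ∈ nhds θ₀)
    (hInt : ∀ θ ∈ U,
      Integrable (fun p : S × E => μ θ p.1 p.2 * Q p.1 (φ p.2)) (ρ.prod ν))
    (hDiff : ∀ᵐ p : S × E ∂ρ.prod ν,
      (∀ θ ∈ U, DifferentiableAt ℝ (fun θ' => μ θ' p.1 p.2) θ) ∧ 0 < μ θ₀ p.1 p.2)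
    (h : S × E → ℝ) (hInt_h : Integrable h (ρ.prod ν))
    (hDom : ∀ᵐ p : S × E ∂ρ.prod ν, ∀ θ ∈ U,
      |deriv (fun θ' => μ θ' p.1 p.2) θ * Q p.1 (φ p.2)| ≤ h p) :
    HasDerivAt (fun θ => ∫ s, ∫ e, μ θ s e * Q s (φ e) ∂ν ∂ρ)
      (∫ s, ∫ e,
        μ θ₀ s e * deriv (fun θ => Real.log (μ θ s e)) θ₀ * Q s (φ e) ∂ν ∂ρ) θ₀ := by
  obtain ⟨hF'_int, hderiv⟩ := hasDerivAt_integral_of_dominated_of_ae_hasDerivAt hU hInt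
    (F' := fun θ p => deriv (fun θ' => μ θ' p.1 p.2) θ * Q p.1 (φ p.2)) hDom hInt_h
    (hDiff.mono fun p hp θ hθ => ((hp.1 θ hθ).hasDerivAt).mul_const _)
  have h_score : ∀ᵐ p : S × E ∂ρ.prod ν,
      μ θ₀ p.1 p.2 * deriv (fun θ => Real.log (μ θ p.1 p.2)) θ₀ * Q p.1 (φ p.2)
        = deriv (fun θ' => μ θ' p.1 p.2) θ₀ * Q p.1 (φ p.2) :=
    hDiff.mono fun p hp => by
      rw [mul_deriv_log_eq_deriv (hp.1 θ₀ (mem_of_mem_nhds hU)) hp.2.ne']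
  rw [integral_integral_eq_integral_prod_of_ae_eq hF'_int h_score]
  refine hderiv.congr_of_eventuallyEq (Filter.mem_of_superset hU fun θ hθ => ?_)
  exact integral_integral_eq_integral_prod_of_ae_eq (hInt θ hθ) (ae_of_all _ fun _ => rfl)

/-- Lemma 1 (full form): with states `s ∼ ρ`, proto-action density `μ θ s e`, a deterministic
mapping `φ` from proto-actions to a finite action set, and value function `Q`, under a
dominated-derivative hypothesis the derivative at `θ₀` of
`θ ↦ ∫ₛ ∫ₑ μ θ s e · Q s (φ e) dν dρ` equals
`∫ₛ ∫ₑ μ θ₀ s e · ∂_θ|_{θ₀} log (μ θ s e) · Q s (φ e) dν dρ`. -/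
theorem policy_gradient_full
    {S : Type*} [MeasurableSpace S] (ρ : Measure S) [SigmaFinite ρ]
    {E : Type*} [MeasurableSpace E] (ν : Measure E) [SigmaFinite ν]
    {A : Type*} [Fintype A] [MeasurableSpace A] (hA : ‹MeasurableSpace A› = ⊤)
    (φ : E → A) (hφ : Measurable φ)
    (Q : S → A → ℝ) (θ₀ : ℝ) (μ : ℝ → S → E → ℝ)
    (U : Set ℝ) (hU : U ∈ nhds θ₀)
    (hInt : ∀ θ ∈ U,
      Integrable (fun p : S × E => μ θ p.1 p.2 * Q p.1 (φ p.2)) (ρ.prod ν))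
    (hDiff : ∀ᵐ p : S × E ∂ρ.prod ν,
      (∀ θ ∈ U, DifferentiableAt ℝ (fun θ' => μ θ' p.1 p.2) θ) ∧ 0 < μ θ₀ p.1 p.2)
    (h : S × E → ℝ) (hInt_h : Integrable h (ρ.prod ν))
    (hDom : ∀ᵐ p : S × E ∂ρ.prod ν, ∀ θ ∈ U,
      |deriv (fun θ' => μ θ' p.1 p.2) θ * Q p.1 (φ p.2)| ≤ h p) :
    HasDerivAt (fun θ => ∫ s, ∫ e, μ θ s e * Q s (φ e) ∂ν ∂ρ)
      (∫ s, ∫ e,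
        μ θ₀ s e * deriv (fun θ => Real.log (μ θ s e)) θ₀ * Q s (φ e) ∂ν ∂ρ) θ₀ :=
  policy_gradient_full_general ρ ν φ Q θ₀ μ U hU hInt hDiff h hInt_h hDom
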